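/- Curry's fixed point combinator Y0 and Turing's fixed point combinator Y1 are not β-convertible: Y0 ≠β Y1. -/

import Mathlib

/-!
Convertible terms have a common reduct by Church–Rosser, proved with parallel reduction and
Takahashi's complete development: whatever `s` parallel-reduces to, parallel-reduces to
`develop s`.

Since `ω_f` has no redex, the reducts of `Y0` are the terms `λf. fⁿ(ω_f ω_f)`. The reducts of `Y1`
are `Y1` and the terms `λf. fⁿ⁺¹(U f)` with `U` again of this form; all of them are closed, so
contracting a redex `U f` merely strips the binder of `U`. The right spine of the body ends in
`ω_f` in the first family and in `f` in the second, so no term is a reduct of both.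
-/

/-- Untyped λ-terms in de Bruijn notation. -/
inductive Lam : Type
  | var : Nat → Lam
  | app : Lam → Lam → Lam
  | lam : Lam → Lam
  deriving DecidableEq

namespace Lam

/-- Lift (shift) free variables ≥ `d` by one. -/
def lift (d : Nat) : Lam → Lam
  | var n => if n < d then var n else var (n + 1)
  | app s t => app (lift d s) (lift d t)
  | lam t => lam (lift (d + 1) t)

/-- Capture-avoiding substitution of `u` for the variable with index `k`. -/
def subst (k : Nat) (u : Lam) : Lam → Lam
  | var n => if n = k then u else if k < n then var (n - 1) else var n
  | app s t => app (subst k u s) (subst k u t)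
  | lam t => lam (subst (k + 1) (lift 0 u) t)

/-- One-step β-reduction `→β` (compatible closure of the β-rule). -/
inductive Step : Lam → Lam → Prop
  | beta (t u : Lam) : Step (app (lam t) u) (subst 0 u t)
  | appL {s s' : Lam} (t : Lam) : Step s s' → Step (app s t) (app s' t)
  | appR (s : Lam) {t t' : Lam} : Step t t' → Step (app s t) (app s t')
  | lam {t t' : Lam} : Step t t' → Step (lam t) (lam t')

/-- Many-step β-reduction `↠β`. -/
def Red : Lam → Lam → Prop := Relation.ReflTransGen Step

/-- β-convertibility `=β`. -/
def Conv : Lam → Lam → Prop := Relation.EqvGen Step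

/-- `Y` is a fixed point combinator: `Y x =β x (Y x)` for a fresh variable `x`. -/
def isFPC (Y : Lam) : Prop :=
  Conv (app (lift 0 Y) (var 0)) (app (var 0) (app (lift 0 Y) (var 0)))

/-- `M P^n`: `M` applied to `n` copies of `P`. -/
def appIter (M P : Lam) : Nat → Lam
  | 0 => M
  | n + 1 => appIter (app M P) P n

/-- `I = λx.x` -/
def K_I : Lam := lam (var 0)

/-- `S = λxyz.xz(yz)` -/
def K_S : Lam := lam (lam (lam (app (app (var 2) (var 0)) (app (var 1) (var 0)))))

/-- `B = λxyz.x(yz)` -/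
def K_B : Lam := lam (lam (lam (app (var 2) (app (var 1) (var 0)))))

/-- `δ = λab.b(ab)` -/
def K_delta : Lam := lam (lam (app (var 0) (app (var 1) (var 0))))

/-- `ω_f = λx.f(xx)` (with `f` the variable bound just outside). -/
def K_omega : Lam := lam (app (var 1) (app (var 0) (var 0)))

/-- Curry's fpc `Y0 = λf.ω_f ω_f`. -/
def Y0 : Lam := lam (app K_omega K_omega)

/-- `η = λxf.f(xxf)` -/
def K_eta : Lam := lam (lam (app (var 0) (app (app (var 1) (var 1)) (var 0))))

/-- Turing's fpc `Y1 = ηη`. -/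
def Y1 : Lam := app K_eta K_eta

/-- One head reduction step: contraction of the head redex. -/
inductive Head : Lam → Lam → Prop
  | beta (t u : Lam) : Head (app (lam t) u) (subst 0 u t)
  | app {s s' : Lam} (t : Lam) : (∀ u, s ≠ lam u) → Head s s' → Head (app s t) (app s' t)
  | lam {t t' : Lam} : Head t t' → Head (lam t) (lam t')

/-- Exactly `k` head reduction steps. -/
def HeadN : Nat → Lam → Lam → Prop
  | 0, s, t => s = t
  | k + 1, s, t => ∃ u, Head s u ∧ HeadN k u t

/-- Exactly `k` β-reduction steps. -/
def StepN : Nat → Lam → Lam → Prop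
  | 0, s, t => s = t
  | k + 1, s, t => ∃ u, Step s u ∧ StepN k u t

open Relation

theorem lift_lift_of_le (t : Lam) {i j : ℕ} (h : i ≤ j) :
    lift i (lift j t) = lift (j + 1) (lift i t) := by
  induction t generalizing i j with
  | var n => grind [lift]
  | app s t ihs iht => simp [lift, ihs h, iht h]
  | lam t ih => simp [lift, ih (Nat.succ_le_succ h)]

theorem lift_subst_of_le (t u : Lam) {d k : ℕ} (h : d ≤ k) :
    lift d (subst k u t) = subst (k + 1) (lift d u) (lift d t) := by
  induction t generalizing d k u with
  | var n => grind [lift, subst]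
  | app s t ihs iht => simp [lift, subst, ihs _ h, iht _ h]
  | lam t ih => simp [lift, subst, ih _ (Nat.succ_le_succ h), lift_lift_of_le u (Nat.zero_le d)]

theorem lift_subst_of_ge (t u : Lam) {d k : ℕ} (h : k ≤ d) :
    lift d (subst k u t) = subst k (lift d u) (lift (d + 1) t) := by
  induction t generalizing d k u with
  | var n => grind [lift, subst]
  | app s t ihs iht => simp [lift, subst, ihs _ h, iht _ h]
  | lam t ih => simp [lift, subst, ih _ (Nat.succ_le_succ h), lift_lift_of_le u (Nat.zero_le d)]

@[simp]
theorem subst_lift (t u : Lam) (k : ℕ) : subst k u (lift k t) = t := by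
  induction t generalizing k u with
  | var n => grind [lift, subst]
  | app s t ihs iht => simp [lift, subst, ihs, iht]
  | lam t ih => simp [lift, subst, ih]

theorem subst_subst_of_le (t u v : Lam) {i j : ℕ} (h : i ≤ j) :
    subst j v (subst i u t) = subst i (subst j v u) (subst (j + 1) (lift i v) t) := by
  induction t generalizing i j u v with
  | var n => grind [subst, subst_lift]
  | app s t ihs iht => simp [subst, ihs _ _ h, iht _ _ h]
  | lam t ih =>
    simp [subst, ih _ _ (Nat.succ_le_succ h), lift_subst_of_le u v (Nat.zero_le j),
      lift_lift_of_le v (Nat.zero_le i)]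

theorem Red.app_left {s s' : Lam} (t : Lam) (h : Red s s') : Red (app s t) (app s' t) :=
  ReflTransGen.lift (app · t) (fun _ _ => Step.appL t) _ _ h

theorem Red.app_right (s : Lam) {t t' : Lam} (h : Red t t') : Red (app s t) (app s t') :=
  ReflTransGen.lift (app s) (fun _ _ => Step.appR s) _ _ h

theorem Red.lam {t t' : Lam} (h : Red t t') : Red (lam t) (lam t') :=
  ReflTransGen.lift Lam.lam (fun _ _ => Step.lam) _ _ h

inductive Par : Lam → Lam → Prop
  | var (n : ℕ) : Par (var n) (var n)
  | lam {t t' : Lam} : Par t t' → Par (lam t) (lam t')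
  | app {s s' t t' : Lam} : Par s s' → Par t t' → Par (app s t) (app s' t')
  | beta {t t' u u' : Lam} : Par t t' → Par u u' → Par (app (lam t) u) (subst 0 u' t')

theorem Par.refl : ∀ t : Lam, Par t t
  | .var n => .var n
  | .app s t => .app (Par.refl s) (Par.refl t)
  | .lam t => .lam (Par.refl t)

theorem Step.par {s t : Lam} (h : Step s t) : Par s t := by
  induction h with
  | beta t u => exact .beta (.refl t) (.refl u)
  | appL t _ ih => exact .app ih (.refl t)
  | appR s _ ih => exact .app (.refl s) ih
  | lam _ ih => exact .lam ih

theorem Par.red {s t : Lam} (h : Par s t) : Red s t := by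
  induction h with
  | var n => exact .refl
  | lam _ ih => exact ih.lam
  | app _ _ ihs iht => exact (ihs.app_left _).trans (iht.app_right _)
  | beta _ _ iht ihu => exact ((iht.lam.app_left _).trans (ihu.app_right _)).tail (.beta _ _)

theorem Par.lift {t t' : Lam} (h : Par t t') (d : ℕ) : Par (lift d t) (lift d t') := by
  induction h generalizing d with
  | var n => exact .refl _
  | lam _ ih => exact .lam (ih (d + 1))
  | app _ _ ihs iht => exact .app (ihs d) (iht d)
  | beta _ _ iht ihu =>
    simpa [Lam.lift, lift_subst_of_ge _ _ (Nat.zero_le d)] using Par.beta (iht (d + 1)) (ihu d)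

theorem Par.subst {t t' u u' : Lam} (ht : Par t t') (hu : Par u u') (k : ℕ) :
    Par (subst k u t) (subst k u' t') := by
  induction ht generalizing u u' k with
  | var n => simp only [Lam.subst]; split_ifs <;> first | exact hu | exact .refl _
  | lam _ ih => exact .lam (ih (hu.lift 0) (k + 1))
  | app _ _ ihs iht => exact .app (ihs hu k) (iht hu k)
  | beta _ _ iht ihu =>
    simpa [Lam.subst, subst_subst_of_le _ _ _ (Nat.zero_le k)] using
      Par.beta (iht (hu.lift 0) (k + 1)) (ihu hu k)

def develop : Lam → Lam
  | var n => var n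
  | lam t => lam (develop t)
  | app (lam t) u => subst 0 (develop u) (develop t)
  | app s u => app (develop s) (develop u)

theorem Par.par_develop {s t : Lam} (h : Par s t) : Par t (develop s) := by
  induction h with
  | var n => exact .var n
  | lam _ ih => exact .lam ih
  | @app s s' _ _ hs _ ihs iht =>
    cases s with
    | var n => cases hs; exact .app ihs iht
    | app => exact .app ihs iht
    | lam =>
      cases hs
      cases ihs with
      | lam ihs => exact .beta ihs iht
  | beta _ _ iht ihu => exact iht.subst ihu 0

theorem reflTransGen_par_eq_red : ReflTransGen Par = Red :=
  le_antisymm (reflTransGen_closed fun _ _ => Par.red)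
    (ReflTransGen.mono fun _ _ => Step.par)

theorem equivalence_join_red : Equivalence (Join Red) := by
  rw [← reflTransGen_par_eq_red]
  exact equivalence_join_reflTransGen fun a _ _ hab hac =>
    ⟨develop a, .single hab.par_develop, .single hac.par_develop⟩

theorem Conv.exists_common_reduct {s t : Lam} (h : Conv s t) : ∃ d, Red s d ∧ Red t d :=
  equivalence_join_red.eqvGen_iff.1 (EqvGen.mono (fun _ b hab => ⟨b, .single hab, .refl⟩) _ _ h)

def NoRedex : Lam → Prop
  | var _ => True
  | app (lam _) _ => False
  | app s t => NoRedex s ∧ NoRedex t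
  | lam t => NoRedex t

theorem NoRedex.not_step {t t' : Lam} (ht : NoRedex t) : ¬ Step t t' := by
  intro h
  induction h with
  | beta => exact ht
  | @appL s _ _ _ ih => cases s <;> simp_all [NoRedex]
  | appR s _ ih => cases s <;> simp_all [NoRedex]
  | lam _ ih => exact ih ht

theorem subst_iterate_app (s u M : Lam) (k n : ℕ) :
    subst k u ((app s)^[n] M) = (app (subst k u s))^[n] (subst k u M) := by
  induction n with
  | zero => rfl
  | succ n ih => simp [Function.iterate_succ_apply', Lam.subst, ih]

theorem Step.iterate_app_var {k n : ℕ} {M N : Lam} (h : Step ((app (var k))^[n] M) N) :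
    ∃ M', Step M M' ∧ N = (app (var k))^[n] M' := by
  induction n generalizing N with
  | zero => exact ⟨N, h, rfl⟩
  | succ n ih =>
    rw [Function.iterate_succ_apply'] at h
    cases h with
    | appL _ h => cases h
    | appR _ h =>
      obtain ⟨M', hM, rfl⟩ := ih h
      exact ⟨M', hM, (Function.iterate_succ_apply' _ _ _).symm⟩

theorem exists_eq_of_red_Y0 {d : Lam} (h : Red Y0 d) :
    ∃ n, d = lam ((app (var 0))^[n] (app K_omega K_omega)) := by
  induction h with
  | refl => exact ⟨0, rfl⟩
  | tail _ hstep ih =>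
    obtain ⟨n, rfl⟩ := ih
    cases hstep with
    | lam hstep =>
      obtain ⟨M, hM, rfl⟩ := hstep.iterate_app_var
      have hK : NoRedex K_omega := by simp [NoRedex, K_omega]
      cases hM with
      | beta => exact ⟨n + 1, rfl⟩
      | appL _ h => exact absurd h hK.not_step
      | appR _ h => exact absurd h hK.not_step

inductive TuringForm : Lam → Prop
  | Y1 : TuringForm Y1
  | unfold {U : Lam} (n : ℕ) :
      TuringForm U → TuringForm (lam ((app (var 0))^[n + 1] (app U (var 0))))

theorem TuringForm.subst_eq {U : Lam} (h : TuringForm U) (k : ℕ) (u : Lam) : subst k u U = U := by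
  induction h generalizing k u with
  | Y1 => simp [Lam.subst, Lam.Y1, K_eta]
  | unfold n _ ih => simp [Lam.subst, subst_iterate_app, ih]

theorem TuringForm.step {U V : Lam} (h : TuringForm U) (hs : Step U V) : TuringForm V := by
  induction h generalizing V with
  | Y1 =>
    have hK : NoRedex K_eta := by simp [NoRedex, K_eta]
    cases hs with
    | beta => exact .unfold 0 .Y1
    | appL _ h => exact absurd h hK.not_step
    | appR _ h => exact absurd h hK.not_step
  | unfold n hU ih =>
    cases hs with
    | lam hs =>
      obtain ⟨M, hM, rfl⟩ := hs.iterate_app_var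
      cases hM with
      | beta =>
        cases hU with
        | @unfold U' m hU' =>
          have hbody : subst 0 (var 0) ((app (var 0))^[m + 1] (app U' (var 0))) =
              (app (var 0))^[m + 1] (app U' (var 0)) := by
            simp [subst_iterate_app, Lam.subst, hU'.subst_eq]
          rw [hbody, ← Function.iterate_add_apply]
          exact (show n + 1 + (m + 1) = n + m + 1 + 1 by omega) ▸ .unfold (n + m + 1) hU'
      | appL _ h => exact .unfold n (ih h)
      | appR _ h => cases h

theorem turingForm_of_red_Y1 {d : Lam} (h : Red Y1 d) : TuringForm d := by
  induction h with
  | refl => exact .Y1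
  | tail _ hs ih => exact ih.step hs

def rightmost : Lam → Lam
  | app _ t => rightmost t
  | t => t

theorem rightmost_iterate_app (s M : Lam) (n : ℕ) : rightmost ((app s)^[n] M) = rightmost M := by
  induction n with
  | zero => rfl
  | succ n ih => rw [Function.iterate_succ_apply', rightmost, ih]

theorem TuringForm.rightmost_body {t : Lam} (h : TuringForm (lam t)) : rightmost t = var 0 := by
  cases h
  simp [rightmost_iterate_app, rightmost]

/-- Curry's fpc `Y0` and Turing's fpc `Y1` are not β-convertible. -/
theorem Y0_not_conv_Y1 : ¬ Conv Y0 Y1 := by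
  intro h
  obtain ⟨d, h0, h1⟩ := h.exists_common_reduct
  obtain ⟨n, rfl⟩ := exists_eq_of_red_Y0 h0
  have := (turingForm_of_red_Y1 h1).rightmost_body
  simp [rightmost_iterate_app, rightmost, K_omega] at this

end Lam
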